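/- arXiv:2209.03925 — 2 statements merged into one kernel-verified Lean document; each statement's English description precedes it below -/
import Mathlib

section
/- Every nonempty score sequence can be written uniquely as a direct sum t_1 ⊕ t_2 ⊕ ... ⊕ t_k of nonempty strong score sequences. -/
/-- A score sequence: nondecreasing, entries in `[0, n-1]`, prefix sums at least
`binom k 2`, and total sum `binom n 2`. -/
def IsScoreSeq (s : List ℕ) : Prop :=
  s.Pairwise (· ≤ ·) ∧ (∀ x ∈ s, x < s.length) ∧
    (∀ k, 0 < k → k < s.length → k.choose 2 ≤ (s.take k).sum) ∧
    s.sum = s.length.choose 2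

/-- A strong score sequence: nonempty and all proper prefix-sum inequalities strict. -/
def IsStrongScoreSeq (s : List ℕ) : Prop :=
  IsScoreSeq s ∧ s ≠ [] ∧ ∀ k, 0 < k → k < s.length → k.choose 2 < (s.take k).sum

/-- Direct sum of score sequences: concatenate `u` with `v` shifted up by `u.length`. -/
def dsum (u v : List ℕ) : List ℕ := u ++ v.map (· + u.length)

/-- Iterated direct sum of a list of score sequences. -/
def dsumAll (ts : List (List ℕ)) : List ℕ := ts.foldl dsum []

/-- `s + j`: entries shifted by `j`, reduced modulo the length, sorted nondecreasingly. -/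
def shift (s : List ℕ) (j : ℕ) : List ℕ :=
  Multiset.sort ((s.map fun x => (x + j) % s.length : List ℕ) : Multiset ℕ) (· ≤ ·)

/-!
The decomposition is read off the prefix sums: a score sequence `s` splits as `u ⊕ v` exactly
at the lengths `k` where the prefix sum is tight, `s_0 + ⋯ + s_{k-1} = binomial(k, 2)`, and the
first block is strong exactly when `k` is the least such length. Splitting at the least tight
length and recursing on `v` gives existence. For uniqueness, two strong blocks that are prefixes
of the same sequence coincide, since a shorter one would be a tight proper prefix of the longer.
-/

theorem Nat.succ_choose_two (n : ℕ) : (n + 1).choose 2 = n.choose 2 + n := by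
  rw [Nat.choose_succ_succ', Nat.choose_one_right, add_comm]

theorem Nat.choose_two_add (a b : ℕ) : (a + b).choose 2 = a.choose 2 + a * b + b.choose 2 := by
  induction b with
  | zero => simp
  | succ b ih =>
    rw [← add_assoc, Nat.succ_choose_two, Nat.succ_choose_two, ih]
    ring

theorem dsum_nil (v : List ℕ) : dsum [] v = v := by simp [dsum]

theorem dsum_nil_right (u : List ℕ) : dsum u [] = u := by simp [dsum]

theorem dsum_assoc (a b c : List ℕ) : dsum (dsum a b) c = dsum a (dsum b c) := by
  simp only [dsum, List.map_append, List.map_map, List.append_assoc, List.length_append,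
    List.length_map]
  congr 3
  funext x
  simp only [Function.comp_apply]
  omega

instance : Std.Associative dsum := ⟨dsum_assoc⟩

theorem dsumAll_cons (t : List ℕ) (ts : List (List ℕ)) :
    dsumAll (t :: ts) = dsum t (dsumAll ts) := by
  rw [dsumAll, dsumAll, List.foldl_cons, dsum_nil]
  conv_lhs => rw [← dsum_nil_right t]
  exact List.foldl_assoc

theorem dsumAll_cons_ne_nil {t : List ℕ} (ht : t ≠ []) (ts : List (List ℕ)) :
    dsumAll (t :: ts) ≠ [] := by
  simp [dsumAll_cons, dsum, ht]

theorem dsum_right_injective (u : List ℕ) : Function.Injective (dsum u) := fun _ _ h =>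
  List.map_injective_iff.2 (add_left_injective u.length) (List.append_cancel_left h)

theorem sum_dsum (u v : List ℕ) : (dsum u v).sum = u.sum + v.sum + u.length * v.length := by
  simp only [dsum, List.sum_append, List.sum_map_add, List.map_id_fun', id_eq, List.map_const',
    List.sum_replicate, smul_eq_mul]
  ring

theorem take_length_add_dsum (u v : List ℕ) (m : ℕ) :
    (dsum u v).take (u.length + m) = dsum u (v.take m) := by
  rw [dsum, dsum, List.take_length_add_append, List.map_take]

theorem List.Pairwise.rel_getElem_of_le {α : Type*} {R : α → α → Prop} [Std.Refl R]
    {l : List α} (h : l.Pairwise R) {i j : ℕ} (hij : i ≤ j) (hj : j < l.length) :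
    R l[i] l[j] :=
  h.rel_get_of_le (a := ⟨i, hij.trans_lt hj⟩) (b := ⟨j, hj⟩) hij

namespace IsScoreSeq

variable {s : List ℕ}

theorem choose_le_sum_take (hs : IsScoreSeq s) {k : ℕ} (hk : k ≤ s.length) :
    k.choose 2 ≤ (s.take k).sum := by
  rcases Nat.eq_zero_or_pos k with rfl | hk0
  · simp
  rcases hk.lt_or_eq with hk | rfl
  · exact hs.2.2.1 k hk0 hk
  · rw [List.take_length, hs.2.2.2]

theorem lt_of_mem_take (hs : IsScoreSeq s) {k : ℕ} (hk : k ≤ s.length)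
    (htight : (s.take k).sum = k.choose 2) {x : ℕ} (hx : x ∈ s.take k) : x < k := by
  obtain ⟨i, hi, rfl⟩ := List.mem_take_iff_getElem.1 hx
  obtain ⟨j, rfl⟩ : ∃ j, k = j + 1 := Nat.exists_eq_add_one.2 (by omega)
  have hlast := List.sum_take_succ s j (by omega)
  have hprev := hs.choose_le_sum_take (k := j) (by omega)
  have hmono := hs.1.rel_getElem_of_le (i := i) (j := j) (by omega) (by omega)
  rw [Nat.succ_choose_two] at htight
  omega

theorem le_of_mem_drop (hs : IsScoreSeq s) {k : ℕ} (htight : (s.take k).sum = k.choose 2)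
    {y : ℕ} (hy : y ∈ s.drop k) : k ≤ y := by
  obtain ⟨i, hi, rfl⟩ := List.mem_drop_iff_getElem.1 hy
  have hnext := List.sum_take_succ s k (by omega)
  have hle := hs.choose_le_sum_take (k := k + 1) (by omega)
  have hmono := hs.1.rel_getElem_of_le (i := k) (j := k + i) (by omega) (by omega)
  rw [Nat.succ_choose_two] at hle
  omega

theorem take_of_sum_eq (hs : IsScoreSeq s) {k : ℕ} (hk : k ≤ s.length)
    (htight : (s.take k).sum = k.choose 2) : IsScoreSeq (s.take k) := by
  have hlen : (s.take k).length = k := List.length_take_of_le hk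
  refine ⟨hs.1.sublist (List.take_sublist k s), fun x hx => ?_, fun j _ hj => ?_, ?_⟩
  · rw [hlen]
    exact hs.lt_of_mem_take hk htight hx
  · rw [hlen] at hj
    rw [List.take_take, min_eq_left hj.le]
    exact hs.choose_le_sum_take (by omega)
  · rw [hlen, htight]

theorem dsum_take_map_sub_drop (hs : IsScoreSeq s) {k : ℕ} (hk : k ≤ s.length)
    (htight : (s.take k).sum = k.choose 2) :
    dsum (s.take k) ((s.drop k).map (· - k)) = s := by
  have hshift : ((s.drop k).map (· - k)).map (· + (s.take k).length) = s.drop k := by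
    rw [List.length_take_of_le hk, List.map_map]
    conv_rhs => rw [← List.map_id (s.drop k)]
    refine List.map_congr_left fun y hy => ?_
    have hky := hs.le_of_mem_drop htight hy
    simp only [Function.comp_apply, id_eq]
    omega
  rw [dsum, hshift, List.take_append_drop]

theorem of_dsum {u v : List ℕ} (h : IsScoreSeq (dsum u v)) (hu : IsScoreSeq u) :
    IsScoreSeq v := by
  have hlen : (dsum u v).length = u.length + v.length := by simp [dsum]
  refine ⟨?_, fun x hx => ?_, fun m _ hm => ?_, ?_⟩
  · have hsorted := (List.pairwise_append.1 h.1).2.1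
    rw [List.pairwise_map] at hsorted
    exact hsorted.imp fun hab => by omega
  · have hbound := h.2.1 (x + u.length) (List.mem_append_right _ (List.mem_map_of_mem hx))
    omega
  · have hle := h.choose_le_sum_take (k := u.length + m) (by omega)
    rw [take_length_add_dsum, sum_dsum, List.length_take_of_le hm.le, hu.2.2.2,
      Nat.choose_two_add] at hle
    omega
  · have htot := h.2.2.2
    rw [sum_dsum, hlen, hu.2.2.2, Nat.choose_two_add] at htot
    omega

theorem exists_strong_take (hs : IsScoreSeq s) (hne : s ≠ []) :
    ∃ k, 0 < k ∧ k ≤ s.length ∧ (s.take k).sum = k.choose 2 ∧ IsStrongScoreSeq (s.take k) := by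
  classical
  have htight : ∃ k, 0 < k ∧ k ≤ s.length ∧ (s.take k).sum = k.choose 2 :=
    ⟨s.length, List.length_pos_iff.2 hne, le_rfl, by rw [List.take_length, hs.2.2.2]⟩
  obtain ⟨hk0, hk, hsum⟩ := Nat.find_spec htight
  refine ⟨_, hk0, hk, hsum, hs.take_of_sum_eq hk hsum, by simp [hk0.ne', hne], fun j hj0 hj => ?_⟩
  rw [List.length_take_of_le hk] at hj
  rw [List.take_take, min_eq_left hj.le]
  exact (hs.choose_le_sum_take (by omega)).lt_of_ne fun heq =>
    Nat.find_min htight hj ⟨hj0, by omega, heq.symm⟩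

theorem exists_strong_decomposition {s : List ℕ} (hs : IsScoreSeq s) :
    ∃ ts : List (List ℕ), (∀ t ∈ ts, IsStrongScoreSeq t) ∧ dsumAll ts = s := by
  rcases eq_or_ne s [] with rfl | hne
  · exact ⟨[], by simp, rfl⟩
  obtain ⟨k, hk0, hk, htight, hstrong⟩ := hs.exists_strong_take hne
  have hsplit := hs.dsum_take_map_sub_drop hk htight
  have hv : IsScoreSeq ((s.drop k).map (· - k)) := IsScoreSeq.of_dsum (by rwa [hsplit]) hstrong.1
  have : ((s.drop k).map (· - k)).length < s.length := by
    simp only [List.length_map, List.length_drop]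
    omega
  obtain ⟨ts, hts, hsum⟩ := hv.exists_strong_decomposition
  refine ⟨s.take k :: ts, List.forall_mem_cons.2 ⟨hstrong, hts⟩, ?_⟩
  rw [dsumAll_cons, hsum, hsplit]
termination_by s.length

end IsScoreSeq

namespace IsStrongScoreSeq

theorem eq_of_isPrefix {t t' : List ℕ} (ht : IsScoreSeq t) (hne : t ≠ [])
    (ht' : IsStrongScoreSeq t') (h : t <+: t') : t = t' := by
  refine h.eq_of_length (h.length_le.antisymm (not_lt.1 fun hlt => ?_))
  have := ht'.2.2 t.length (List.length_pos_iff.2 hne) hlt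
  rw [← List.prefix_iff_eq_take.1 h, ht.2.2.2] at this
  exact lt_irrefl _ this

theorem eq_of_isPrefix_of_isPrefix {t t' l : List ℕ} (ht : IsStrongScoreSeq t)
    (ht' : IsStrongScoreSeq t') (h : t <+: l) (h' : t' <+: l) : t = t' :=
  (List.prefix_or_prefix_of_prefix h h').elim (eq_of_isPrefix ht.1 ht.2.1 ht')
    fun p => (eq_of_isPrefix ht'.1 ht'.2.1 ht p).symm

end IsStrongScoreSeq

theorem dsumAll_injOn : Set.InjOn dsumAll {ts | ∀ t ∈ ts, IsStrongScoreSeq t} := by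
  intro ts hts ts' hts' h
  induction ts generalizing ts' with
  | nil =>
    cases ts' with
    | nil => rfl
    | cons t' _ => exact absurd h.symm (dsumAll_cons_ne_nil (hts' t' (by simp)).2.1 _)
  | cons t ts ih =>
    cases ts' with
    | nil => exact absurd h (dsumAll_cons_ne_nil (hts t (by simp)).2.1 _)
    | cons t' ts' =>
      simp only [Set.mem_ofPred_eq, List.forall_mem_cons] at hts hts'
      rw [dsumAll_cons, dsumAll_cons] at h
      obtain rfl : t = t' := hts.1.eq_of_isPrefix_of_isPrefix hts'.1
        (l := dsum t' (dsumAll ts')) (h ▸ List.prefix_append _ _) (List.prefix_append _ _)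
      rw [ih hts.2 hts'.2 (dsum_right_injective t h)]

theorem scoreSeq_unique_strong_decomposition_general (s : List ℕ) (hs : IsScoreSeq s) :
    ∃! ts : List (List ℕ), (∀ t ∈ ts, IsStrongScoreSeq t) ∧ dsumAll ts = s := by
  obtain ⟨ts, hts, rfl⟩ := hs.exists_strong_decomposition
  exact ⟨ts, ⟨hts, rfl⟩, fun ts' h => dsumAll_injOn h.1 hts h.2⟩

/-- Every nonempty score sequence decomposes uniquely as a direct sum of nonempty
strong score sequences. -/
theorem scoreSeq_unique_strong_decomposition (s : List ℕ) (hs : IsScoreSeq s) (hne : s ≠ []) :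
    ∃! ts : List (List ℕ), (∀ t ∈ ts, IsStrongScoreSeq t) ∧ dsumAll ts = s :=
  scoreSeq_unique_strong_decomposition_general s hs
end

section
/- Let s be a strong score sequence of length n. Then the n multisets μ(s+j) = {s_0 + j, s_1 + j, ..., s_{n-1} + j} over Z/nZ, for j = 0, 1, ..., n-1, are pairwise distinct. -/
theorem Nat.add_choose_two (a b : ℕ) : (a + b).choose 2 = a.choose 2 + b.choose 2 + a * b := by
  simp [Nat.add_choose_eq, Finset.Nat.antidiagonal_succ]
  ring

theorem Nat.add_mod_of_lt_of_le {x j n : ℕ} (hx : x < n) (hj : j ≤ n) :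
    (x + j) % n = if x + j < n then x + j else x + j - n := by
  split_ifs with h
  · exact Nat.mod_eq_of_lt h
  · rw [Nat.mod_eq_sub_mod (by omega), Nat.mod_eq_of_lt (by omega)]

theorem List.Pairwise.filter_lt_eq_take {α : Type*} [LinearOrder α] {s : List α}
    (hs : s.Pairwise (· ≤ ·)) (t : α) :
    s.filter (· < t) = s.take (s.filter (· < t)).length := by
  induction s with
  | nil => simp
  | cons x xs ih =>
    rw [List.pairwise_cons] at hs
    by_cases hx : x < t
    · simp [hx, ← ih hs.2]
    · have : xs.filter (· < t) = [] :=
        List.filter_eq_nil_iff.2 fun y hy => by simpa using (not_lt.1 hx).trans (hs.1 y hy)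
      simp [hx, this]

namespace Multiset

theorem sum_map_add_const {M : Type*} [AddCommMonoid M] (s : Multiset M) (c : M) :
    (s.map (· + c)).sum = s.sum + card s • c := by
  simp [sum_map_add]

variable {n j : ℕ} {S : Multiset ℕ}

theorem filter_le_eq_map_add_of_map_add_mod_eq (hS : ∀ x ∈ S, x < n) (hj : j ≤ n)
    (h : S.map (fun x => (x + j) % n) = S) :
    S.filter (j ≤ ·) = (S.filter (· < n - j)).map (· + j) := by
  conv_lhs => rw [← h]
  have hfilter : S.filter (fun x => j ≤ (x + j) % n) = S.filter (· < n - j) :=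
    filter_congr fun x hx => by
      have := hS x hx
      rw [Nat.add_mod_of_lt_of_le this hj]
      split_ifs <;> omega
  simp only [filter_map, Function.comp_def, hfilter]
  refine map_congr rfl fun x hx => ?_
  have := (mem_filter.1 hx).2
  exact Nat.mod_eq_of_lt (by omega)

theorem eq_filter_lt_add_map_add_of_map_add_mod_eq (hS : ∀ x ∈ S, x < n) (hj : j ≤ n)
    (h : S.map (fun x => (x + j) % n) = S) :
    S = S.filter (· < j) + (S.filter (· < n - j)).map (· + j) := by
  rw [← filter_le_eq_map_add_of_map_add_mod_eq hS hj h]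
  simpa only [not_lt] using (filter_add_not (· < j) S).symm

theorem map_add_sub_mod_eq_of_map_add_mod_eq (hS : ∀ x ∈ S, x < n) (hj : j ≤ n)
    (h : S.map (fun x => (x + j) % n) = S) :
    S.map (fun x => (x + (n - j)) % n) = S := by
  conv_lhs => rw [← h]
  rw [map_map]
  conv_rhs => rw [← map_id S]
  refine map_congr rfl fun x hx => ?_
  simp [Nat.mod_add_mod, show x + j + (n - j) = x + n by omega, Nat.mod_eq_of_lt (hS x hx)]

theorem card_filter_lt_and_sum_eq_of_map_add_mod_eq (hS : ∀ x ∈ S, x < n) (hcard : card S = n) (hj : j ≤ n)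
    (h : S.map (fun x => (x + j) % n) = S) :
    card (S.filter (· < j)) = j ∧ card (S.filter (· < n - j)) = n - j ∧
      S.sum = (S.filter (· < j)).sum + (S.filter (· < n - j)).sum + j * (n - j) := by
  set P := S.filter (· < j)
  set Q := S.filter (· < n - j)
  have hPQ : S = P + Q.map (· + j) := eq_filter_lt_add_map_add_of_map_add_mod_eq hS hj h
  have hQP : S = Q + P.map (· + (n - j)) := by
    have := eq_filter_lt_add_map_add_of_map_add_mod_eq hS (Nat.sub_le n j)
      (map_add_sub_mod_eq_of_map_add_mod_eq hS hj h)
    rwa [Nat.sub_sub_self hj] at this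
  have hcardPQ : card P + card Q = n := by
    rw [← hcard, hPQ, card_add, card_map]
  have hsumPQ := congrArg sum hPQ
  have hsumQP := congrArg sum hQP
  rw [sum_add, sum_map_add_const, smul_eq_mul] at hsumPQ hsumQP
  have hPj : card P = j := by
    rcases Nat.eq_zero_or_pos n with rfl | hn
    · omega
    refine Nat.eq_of_mul_eq_mul_right hn ?_
    calc card P * n = card P * j + card P * (n - j) := by rw [← mul_add, Nat.add_sub_cancel' hj]
      _ = (card P + card Q) * j := by rw [add_mul]; omega
      _ = j * n := by rw [hcardPQ, mul_comm]
  refine ⟨hPj, by omega, ?_⟩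
  rw [hPj] at hsumQP
  omega

theorem map_add_mod_eq_of_map_natCast_add_eq {i : ℕ}
    (hS : ∀ x ∈ S, x < n) (hij : i ≤ j)
    (h : S.map (fun x => ((x + i : ℕ) : ZMod n)) = S.map (fun x => ((x + j : ℕ) : ZMod n))) :
    S.map (fun x => (x + (j - i)) % n) = S := by
  have h' := congrArg (map fun z : ZMod n => (z - i).val) h
  simp only [map_map, Function.comp_def] at h'
  calc S.map (fun x => (x + (j - i)) % n)
      = S.map (fun x => ((x + j : ℕ) - i : ZMod n).val) := by
        refine map_congr rfl fun x _ => ?_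
        rw [← ZMod.val_natCast, Nat.cast_add, Nat.cast_sub hij, Nat.cast_add]
        ring_nf
    _ = S.map (fun x => ((x + i : ℕ) - i : ZMod n).val) := h'.symm
    _ = S := by
        conv_rhs => rw [← map_id S]
        refine map_congr rfl fun x hx => ?_
        simp [ZMod.val_natCast, Nat.mod_eq_of_lt (hS x hx)]

end Multiset

namespace IsStrongScoreSeq

variable {s : List ℕ}

theorem choose_two_lt_sum_filter_lt (hs : IsStrongScoreSeq s) (t : ℕ)
    (h0 : 0 < Multiset.card ((s : Multiset ℕ).filter (· < t)))
    (hlt : Multiset.card ((s : Multiset ℕ).filter (· < t)) < s.length) :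
    (Multiset.card ((s : Multiset ℕ).filter (· < t))).choose 2 <
      ((s : Multiset ℕ).filter (· < t)).sum := by
  simp only [Multiset.filter_coe, Multiset.coe_card, Multiset.sum_coe] at *
  have := hs.2.2 _ h0 hlt
  rwa [← hs.1.1.filter_lt_eq_take] at this

theorem map_add_mod_ne (hs : IsStrongScoreSeq s) {j : ℕ} (hj0 : 0 < j) (hjn : j < s.length) :
    (s : Multiset ℕ).map (fun x => (x + j) % s.length) ≠ s := by
  intro h
  obtain ⟨hP, hQ, hsum⟩ := Multiset.card_filter_lt_and_sum_eq_of_map_add_mod_eq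
    hs.1.2.1 (Multiset.coe_card s) hjn.le h
  have hPlt := hs.choose_two_lt_sum_filter_lt j (by omega) (by omega)
  have hQlt := hs.choose_two_lt_sum_filter_lt (s.length - j) (by omega) (by omega)
  rw [hP] at hPlt
  rw [hQ] at hQlt
  have hchoose := Nat.add_choose_two j (s.length - j)
  rw [Nat.add_sub_cancel' hjn.le] at hchoose
  have htotal : (s : Multiset ℕ).sum = s.length.choose 2 := hs.1.2.2.2
  omega

end IsStrongScoreSeq

/-- For a strong score sequence `s` of length `n`, the `n` multisets of residues of
shifted entries are pairwise distinct. -/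
theorem strong_shift_multisets_distinct (s : List ℕ) (hs : IsStrongScoreSeq s)
    (j₁ j₂ : ℕ) (h₁ : j₁ < s.length) (h₂ : j₂ < s.length)
    (h : Multiset.map (fun x => ((x + j₁ : ℕ) : ZMod s.length)) (↑s : Multiset ℕ) =
         Multiset.map (fun x => ((x + j₂ : ℕ) : ZMod s.length)) (↑s : Multiset ℕ)) :
    j₁ = j₂ := by
  have key : ∀ {i j : ℕ}, i < j → j < s.length →
      Multiset.map (fun x => ((x + i : ℕ) : ZMod s.length)) (s : Multiset ℕ) ≠
        Multiset.map (fun x => ((x + j : ℕ) : ZMod s.length)) (s : Multiset ℕ) :=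
    fun hij hj h => hs.map_add_mod_ne (Nat.sub_pos_of_lt hij) (by omega)
      (Multiset.map_add_mod_eq_of_map_natCast_add_eq hs.1.2.1 hij.le h)
  rcases lt_trichotomy j₁ j₂ with hlt | heq | hgt
  · exact (key hlt h₂ h).elim
  · exact heq
  · exact (key hgt h₁ h.symm).elim
end
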